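/- arXiv:0705.0908 — 8 statements merged into one kernel-verified Lean document; each statement's English description precedes it below -/
import Mathlib

section
/- Let H be an infinite-dimensional complex Hilbert space and let 𝒯 ⊆ B₁ be a family of operators of norm at most 1. Then 𝒯, viewed as a family of maps H₁ → H₁, is UEC for the weak uniformity if and only if the family {ψ_T : T ∈ 𝒯} of maps B₁ → B₁ given by ψ_T(A) = T A is UEC for the weak operator uniformity. -/
open scoped InnerProductSpace

/-- A family of maps `F k : H → H` (viewed as maps of the closed unit ball `H₁` to itself)
is *uniformly equicontinuous (UEC) for the weak uniformity* if for every `ε > 0` and all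
vectors `x₁, …, x_N ∈ H₁` there exist `δ > 0` and vectors `w₁, …, w_M ∈ H₁` such that for
all `ξ, η ∈ H₁` with `|⟪ξ - η, w_j⟫| < δ` for all `j`, and every member of the family,
`|⟪F k ξ - F k η, x_i⟫| < ε` for all `i`. -/
def UECweak {H : Type*} [NormedAddCommGroup H] [InnerProductSpace ℂ H]
    {ι : Type*} (F : ι → H → H) : Prop :=
  ∀ ε : ℝ, 0 < ε → ∀ (N : ℕ) (x : Fin N → H), (∀ i, ‖x i‖ ≤ 1) →
    ∃ (δ : ℝ) (M : ℕ) (w : Fin M → H), 0 < δ ∧ (∀ j, ‖w j‖ ≤ 1) ∧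
      ∀ ξ η : H, ‖ξ‖ ≤ 1 → ‖η‖ ≤ 1 →
        (∀ j, ‖⟪ξ - η, w j⟫_ℂ‖ < δ) →
        ∀ (k : ι) (i : Fin N), ‖⟪F k ξ - F k η, x i⟫_ℂ‖ < ε

/-- A family of maps `G k : B(H) → B(H)` (viewed as maps of the closed unit ball `B₁` to
itself) is *uniformly equicontinuous (UEC) for the weak operator uniformity* if for every
`ε > 0` and all vectors `x₁, …, x_N, y₁, …, y_N ∈ H₁` there exist `δ > 0` and vectors
`z₁, …, z_M, w₁, …, w_M ∈ H₁` such that for all `A, B ∈ B₁` with `|⟪(A - B) z_j, w_j⟫| < δ`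
for all `j`, and every member of the family, `|⟪(G k A - G k B) x_i, y_i⟫| < ε` for all `i`. -/
def UECwot {H : Type*} [NormedAddCommGroup H] [InnerProductSpace ℂ H]
    {ι : Type*} (G : ι → (H →L[ℂ] H) → (H →L[ℂ] H)) : Prop :=
  ∀ ε : ℝ, 0 < ε → ∀ (N : ℕ) (x y : Fin N → H), (∀ i, ‖x i‖ ≤ 1) → (∀ i, ‖y i‖ ≤ 1) →
    ∃ (δ : ℝ) (M : ℕ) (z w : Fin M → H), 0 < δ ∧ (∀ j, ‖z j‖ ≤ 1) ∧ (∀ j, ‖w j‖ ≤ 1) ∧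
      ∀ A B : H →L[ℂ] H, ‖A‖ ≤ 1 → ‖B‖ ≤ 1 →
        (∀ j, ‖⟪(A - B) (z j), w j⟫_ℂ‖ < δ) →
        ∀ (k : ι) (i : Fin N), ‖⟪(G k A - G k B) (x i), y i⟫_ℂ‖ < ε

/-!
If `T` is weakly equicontinuous on `H₁`, then so is `A ↦ T A` in the weak operator uniformity:
`⟪(T A - T B) x, y⟫ = ⟪T (A x) - T (B x), y⟫` with `A x, B x ∈ H₁`, so it suffices that
`⟪(A - B) x_i, w_j⟫` be small for every pair of a given vector `x_i` and a weak-test vector `w_j`.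
Conversely, fix a unit vector `e` and test on the rank-one operators `ξ ⊗ e`, `η ⊗ e`: they lie in
`B₁`, `(ξ ⊗ e - η ⊗ e) z = ⟪e, z⟫ (ξ - η)` is weakly small when `ξ - η` is, and
`T (ξ ⊗ e) e = T ξ`.
-/

open InnerProductSpace ContinuousLinearMap

lemma norm_inner_rankOne_sub_apply_le {𝕜 E : Type*} [RCLike 𝕜] [SeminormedAddCommGroup E]
    [InnerProductSpace 𝕜 E] {e z : E} (he : ‖e‖ ≤ 1) (hz : ‖z‖ ≤ 1) (ξ η w : E) :
    ‖⟪(rankOne 𝕜 ξ e - rankOne 𝕜 η e) z, w⟫_𝕜‖ ≤ ‖⟪ξ - η, w⟫_𝕜‖ := by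
  have hez : ‖⟪e, z⟫_𝕜‖ ≤ 1 :=
    (norm_inner_le_norm e z).trans (mul_le_one₀ he (norm_nonneg z) hz)
  rw [← sub_apply, ← map_sub, rankOne_apply, inner_smul_left, norm_mul, RCLike.norm_conj]
  exact mul_le_of_le_one_left (norm_nonneg _) hez

lemma comp_rankOne_sub_comp_rankOne_apply_self {𝕜 E : Type*} [RCLike 𝕜]
    [SeminormedAddCommGroup E] [InnerProductSpace 𝕜 E] {e : E} (he : ‖e‖ = 1)
    (T : E →L[𝕜] E) (ξ η : E) :
    (T ∘L rankOne 𝕜 ξ e - T ∘L rankOne 𝕜 η e) e = T ξ - T η := by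
  simp [comp_rankOne, inner_self_eq_norm_sq_to_K, he]

section LeftMul

variable {H : Type*} [NormedAddCommGroup H] [InnerProductSpace ℂ H] {ι : Type*}
  (T : ι → H →L[ℂ] H)

lemma uecWot_leftMul_of_uecWeak (hT : UECweak fun k => ⇑(T k)) :
    UECwot fun k A => T k ∘L A := by
  intro ε hε N x y hx hy
  obtain ⟨δ, M, w, hδ, hw, hweak⟩ := hT ε hε N y hy
  refine ⟨δ, M * N, fun p => x (finProdFinEquiv.symm p).2,
    fun p => w (finProdFinEquiv.symm p).1, hδ, fun _ => hx _, fun _ => hw _, ?_⟩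
  intro A B hA hB hAB k i
  have hA_x : ‖A (x i)‖ ≤ 1 := (A.le_opNorm_of_le (hx i)).trans (by simpa using hA)
  have hB_x : ‖B (x i)‖ ≤ 1 := (B.le_opNorm_of_le (hx i)).trans (by simpa using hB)
  have hAB_x : ∀ j, ‖⟪A (x i) - B (x i), w j⟫_ℂ‖ < δ := fun j => by
    simpa using hAB (finProdFinEquiv (j, i))
  simpa using hweak _ _ hA_x hB_x hAB_x k i

lemma uecWeak_of_uecWot_leftMul (hT : UECwot fun k A => T k ∘L A) :
    UECweak fun k => ⇑(T k) := by
  intro ε hε N x hx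
  rcases subsingleton_or_nontrivial H with hH | hH
  · refine ⟨1, 0, Fin.elim0, one_pos, fun j => j.elim0, fun _ _ _ _ _ k i => ?_⟩
    simpa [Subsingleton.elim (x i) 0] using hε
  obtain ⟨e, he⟩ := exists_norm_eq H zero_le_one
  obtain ⟨δ, M, z, w, hδ, hz, hw, hwot⟩ := hT ε hε N (fun _ => e) x (fun _ => he.le) hx
  refine ⟨δ, M, w, hδ, hw, fun ξ η hξ hη hξη k i => ?_⟩
  have hξe : ‖rankOne ℂ ξ e‖ ≤ 1 := by simpa [he] using hξ
  have hηe : ‖rankOne ℂ η e‖ ≤ 1 := by simpa [he] using hη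
  have hsmall : ∀ j, ‖⟪(rankOne ℂ ξ e - rankOne ℂ η e) (z j), w j⟫_ℂ‖ < δ := fun j =>
    (norm_inner_rankOne_sub_apply_le he.le (hz j) ξ η (w j)).trans_lt (hξη j)
  simpa [comp_rankOne_sub_comp_rankOne_apply_self he] using hwot _ _ hξe hηe hsmall k i

end LeftMul

theorem uecWeak_iff_uecWot_leftMul_general {H : Type*} [NormedAddCommGroup H]
    [InnerProductSpace ℂ H]
    (𝒯 : Set (H →L[ℂ] H)) :
    UECweak (fun T : 𝒯 => fun ξ : H => (T : H →L[ℂ] H) ξ) ↔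
      UECwot (fun T : 𝒯 => fun A : H →L[ℂ] H => (T : H →L[ℂ] H) ∘L A) :=
  ⟨uecWot_leftMul_of_uecWeak _, uecWeak_of_uecWot_leftMul _⟩

/-- Let `H` be an infinite-dimensional complex Hilbert space and let `𝒯 ⊆ B₁` be a family
of operators of norm at most `1`.  Then `𝒯`, viewed as a family of maps `H₁ → H₁`, is UEC
for the weak uniformity if and only if the family `{ψ_T : T ∈ 𝒯}` of maps `B₁ → B₁` given
by `ψ_T A = T A` is UEC for the weak operator uniformity. -/
theorem uecWeak_iff_uecWot_leftMul {H : Type*} [NormedAddCommGroup H]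
    [InnerProductSpace ℂ H] [CompleteSpace H] (hinf : ¬ FiniteDimensional ℂ H)
    (𝒯 : Set (H →L[ℂ] H)) (h𝒯 : ∀ T ∈ 𝒯, ‖T‖ ≤ 1) :
    UECweak (fun T : 𝒯 => fun ξ : H => (T : H →L[ℂ] H) ξ) ↔
      UECwot (fun T : 𝒯 => fun A : H →L[ℂ] H => (T : H →L[ℂ] H) ∘L A) :=
  uecWeak_iff_uecWot_leftMul_general 𝒯
end

section
/- Let H be an infinite-dimensional complex Hilbert space and let 𝒯 ⊆ B₁ be a family of operators of norm at most 1. Then the family of adjoints 𝒯* = {T* : T ∈ 𝒯}, viewed as a family of maps H₁ → H₁, is UEC for the weak uniformity if and only if the family {φ_T : T ∈ 𝒯} of maps B₁ → B₁ given by φ_T(A) = A T is UEC for the weak operator uniformity. -/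
open scoped InnerProductSpace

/-! Everything rests on `⟪(A T) x, y⟫ = conj ⟪T† (A† y), x⟫`. Given the weak condition, test it
at `ξ = A† y`, `η = B† y`; the operator condition then needs each vector `w_p` paired with each
`y_q`. Conversely, `ξ ↦ (u ↦ ⟪ξ, u⟫ e)` for a unit vector `e` embeds `H₁` into `B₁`, and testing
the operator condition on these rank-one operators against `y = e` gives back the weak one. -/

section InnerProduct

open ContinuousLinearMap InnerProductSpace

universe u v

variable {𝕜 : Type u} {H : Type v} [RCLike 𝕜] [NormedAddCommGroup H] [InnerProductSpace 𝕜 H]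

theorem norm_inner_adjoint_sub_adjoint [CompleteSpace H] (A B : H →L[𝕜] H) (y w : H) :
    ‖⟪adjoint A y - adjoint B y, w⟫_𝕜‖ = ‖⟪(A - B) w, y⟫_𝕜‖ := by
  rw [← sub_apply, ← map_sub, adjoint_inner_left, norm_inner_symm]

theorem norm_inner_rankOne_apply (e v u w : H) :
    ‖⟪rankOne 𝕜 e v u, w⟫_𝕜‖ = ‖⟪v, u⟫_𝕜‖ * ‖⟪e, w⟫_𝕜‖ := by
  rw [inner_left_rankOne_apply, norm_mul, norm_inner_symm]

end InnerProduct

theorem ContinuousLinearMap.norm_apply_le_one {𝕜 E F : Type*} [NontriviallyNormedField 𝕜]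
    [SeminormedAddCommGroup E] [SeminormedAddCommGroup F] [NormedSpace 𝕜 E] [NormedSpace 𝕜 F]
    {A : E →L[𝕜] F} (hA : ‖A‖ ≤ 1) {v : E} (hv : ‖v‖ ≤ 1) : ‖A v‖ ≤ 1 :=
  (A.le_of_opNorm_le hA v).trans (by simpa using hv)

section UEC

open ContinuousLinearMap InnerProductSpace

universe u v

variable {H : Type u} {ι : Type v} [NormedAddCommGroup H] [InnerProductSpace ℂ H]

theorem uecWeak_of_subsingleton [Subsingleton H] (F : ι → H → H) : UECweak F := by
  intro ε hε N x _
  refine ⟨1, 0, Fin.elim0, one_pos, fun j => j.elim0, fun ξ η _ _ _ k i => ?_⟩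
  simpa [Subsingleton.elim (x i) 0] using hε

theorem uecWot_rightMul_of_uecWeak_adjoint [CompleteSpace H] (T : ι → H →L[ℂ] H)
    (h : UECweak fun k ξ => adjoint (T k) ξ) : UECwot fun k A => A ∘L T k := by
  intro ε hε N x y hx hy
  obtain ⟨δ, M, w, hδ, hw, hcond⟩ := h ε hε N x hx
  refine ⟨δ, M * N, fun j => w (finProdFinEquiv.symm j).1, fun j => y (finProdFinEquiv.symm j).2,
    hδ, fun _ => hw _, fun _ => hy _, fun A B hA hB hAB k i => ?_⟩
  have hpair (p : Fin M) (q : Fin N) : ‖⟪(A - B) (w p), y q⟫_ℂ‖ < δ := by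
    simpa using hAB (finProdFinEquiv (p, q))
  have hweak := hcond (adjoint A (y i)) (adjoint B (y i))
    (norm_apply_le_one (by rwa [LinearIsometryEquiv.norm_map]) (hy i))
    (norm_apply_le_one (by rwa [LinearIsometryEquiv.norm_map]) (hy i))
    (fun j => (norm_inner_adjoint_sub_adjoint A B (y i) (w j)).trans_lt (hpair j i)) k i
  rwa [← norm_inner_adjoint_sub_adjoint, adjoint_comp, adjoint_comp]

theorem uecWeak_adjoint_of_uecWot_rightMul [CompleteSpace H] (T : ι → H →L[ℂ] H)
    (h : UECwot fun k A => A ∘L T k) : UECweak fun k ξ => adjoint (T k) ξ := by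
  rcases subsingleton_or_nontrivial H with _ | _
  · exact uecWeak_of_subsingleton _
  intro ε hε N x hx
  obtain ⟨e, he⟩ := exists_norm_eq H zero_le_one
  obtain ⟨δ, M, z, w, hδ, hz, hw, hcond⟩ := h ε hε N x (fun _ => e) hx (fun _ => he.le)
  refine ⟨δ, M, z, hδ, hz, fun ξ η hξ hη hweak k i => ?_⟩
  have hnorm {v : H} (hv : ‖v‖ ≤ 1) : ‖rankOne ℂ e v‖ ≤ 1 := by
    simpa [he] using hv
  have hop (j : Fin M) : ‖⟪(rankOne ℂ e ξ - rankOne ℂ e η) (z j), w j⟫_ℂ‖ < δ := by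
    rw [← map_sub, norm_inner_rankOne_apply]
    calc ‖⟪ξ - η, z j⟫_ℂ‖ * ‖⟪e, w j⟫_ℂ‖ ≤ ‖⟪ξ - η, z j⟫_ℂ‖ * 1 := by
          gcongr
          exact (norm_inner_le_norm e (w j)).trans (by simpa [he] using hw j)
      _ < δ := by simpa using hweak j
  have hrank := hcond _ _ (hnorm hξ) (hnorm hη) hop k i
  beta_reduce at hrank ⊢
  rwa [rankOne_comp, rankOne_comp, ← map_sub, ← map_sub, norm_inner_rankOne_apply,
    inner_self_eq_one_of_norm_eq_one he, norm_one, mul_one, map_sub] at hrank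

theorem uecWeak_adjoint_iff_uecWot_rightMul_general {H : Type*} [NormedAddCommGroup H]
    [InnerProductSpace ℂ H] [CompleteSpace H]
    (𝒯 : Set (H →L[ℂ] H)) :
    UECweak (fun T : 𝒯 => fun ξ : H => (ContinuousLinearMap.adjoint (T : H →L[ℂ] H)) ξ) ↔
      UECwot (fun T : 𝒯 => fun A : H →L[ℂ] H => A ∘L (T : H →L[ℂ] H)) :=
  ⟨uecWot_rightMul_of_uecWeak_adjoint _, uecWeak_adjoint_of_uecWot_rightMul _⟩

/-- Let `H` be an infinite-dimensional complex Hilbert space and let `𝒯 ⊆ B₁` be a family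
of operators of norm at most `1`.  Then the family of adjoints `𝒯* = {T* : T ∈ 𝒯}`, viewed
as a family of maps `H₁ → H₁`, is UEC for the weak uniformity if and only if the family
`{φ_T : T ∈ 𝒯}` of maps `B₁ → B₁` given by `φ_T A = A T` is UEC for the weak operator
uniformity. -/
theorem uecWeak_adjoint_iff_uecWot_rightMul {H : Type*} [NormedAddCommGroup H]
    [InnerProductSpace ℂ H] [CompleteSpace H] (hinf : ¬ FiniteDimensional ℂ H)
    (𝒯 : Set (H →L[ℂ] H)) (h𝒯 : ∀ T ∈ 𝒯, ‖T‖ ≤ 1) :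
    UECweak (fun T : 𝒯 => fun ξ : H => (ContinuousLinearMap.adjoint (T : H →L[ℂ] H)) ξ) ↔
      UECwot (fun T : 𝒯 => fun A : H →L[ℂ] H => A ∘L (T : H →L[ℂ] H)) :=
  uecWeak_adjoint_iff_uecWot_rightMul_general 𝒯
end UEC
end

section
/- Let S be the left bilateral shift on ℓ²(ℤ) (the unitary operator determined by S e_n = e_{n−1} on the standard orthonormal basis {e_n}_{n∈ℤ}). Then the family of powers {S^k}_{k∈ℤ}, viewed as maps from the closed unit ball of ℓ²(ℤ) to itself, is NOT UEC for the weak uniformity. -/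
/-!
The basis vectors `e_m` tend to `0` weakly: by Bessel's inequality, for any finitely many `w_j`
the coefficients `⟪e_m, w_j⟫` are eventually small. So `ξ = e_m` and `η = 0` are weakly close
for large `m`, while `S^m e_m = e_0` and `S^m 0 = 0` are separated by the functional `⟪·, e_0⟫`.
-/

open scoped InnerProductSpace

open Filter Topology

section Bessel

variable {ι 𝕜 E : Type*} [RCLike 𝕜] [NormedAddCommGroup E] [InnerProductSpace 𝕜 E]
  {v : ι → E}

theorem Orthonormal.tendsto_inner_cofinite_zero (hv : Orthonormal 𝕜 v) (x : E) :
    Tendsto (fun i => ⟪v i, x⟫_𝕜) cofinite (𝓝 0) := by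
  rw [tendsto_zero_iff_norm_tendsto_zero]
  simpa [Real.sqrt_sq (norm_nonneg _)] using
    (hv.inner_products_summable x).tendsto_cofinite_zero.sqrt

theorem Orthonormal.eventually_forall_norm_inner_lt {κ : Type*} [Finite κ]
    (hv : Orthonormal 𝕜 v) (w : κ → E) {δ : ℝ} (hδ : 0 < δ) :
    ∀ᶠ i in cofinite, ∀ j, ‖⟪v i, w j⟫_𝕜‖ < δ :=
  eventually_all.2 fun j => by
    simpa using
      (hv.tendsto_inner_cofinite_zero (w j)).norm.eventually_lt_const (by simpa using hδ)

end Bessel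

theorem lp.orthonormal_single {ι 𝕜 : Type*} [RCLike 𝕜] [DecidableEq ι] :
    Orthonormal 𝕜 (fun i => lp.single 2 i (1 : 𝕜) : ι → lp (fun _ : ι => 𝕜) 2) := by
  rw [orthonormal_iff_ite]
  intro i j
  rw [lp.inner_single_left, lp.single_apply, Pi.single_apply]
  split_ifs <;> simp_all

theorem ContinuousLinearMap.pow_apply_eq_of_apply_eq_sub_one {R M : Type*} [Semiring R]
    [TopologicalSpace M] [AddCommMonoid M] [Module R M] {T : M →L[R] M} {e : ℤ → M}
    (hT : ∀ n, T (e n) = e (n - 1)) (m : ℕ) (a : ℤ) : (T ^ m) (e a) = e (a - m) := by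
  induction m generalizing a with
  | zero => simp
  | succ m ih => rw [pow_succ, mul_apply_eq_comp, hT, ih]; congr 1; push_cast; ring

/-- Let `S` be the left bilateral shift on `ℓ²(ℤ)`, the unitary operator determined by
`S e_n = e_{n-1}` on the standard orthonormal basis `{e_n}_{n ∈ ℤ}`.  Then the family of
powers `{S^k}_{k ∈ ℤ}`, viewed as maps of the closed unit ball of `ℓ²(ℤ)` to itself, is
not UEC for the weak uniformity. -/
theorem not_uecWeak_bilateralShift
    (S : unitary ((lp (fun _ : ℤ => ℂ) 2) →L[ℂ] (lp (fun _ : ℤ => ℂ) 2)))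
    (hS : ∀ n : ℤ,
      (S : (lp (fun _ : ℤ => ℂ) 2) →L[ℂ] (lp (fun _ : ℤ => ℂ) 2)) (lp.single 2 n 1) =
        lp.single 2 (n - 1) 1) :
    ¬ UECweak (fun k : ℤ => fun x : lp (fun _ : ℤ => ℂ) 2 =>
        ((S ^ k : unitary _) : (lp (fun _ : ℤ => ℂ) 2) →L[ℂ] (lp (fun _ : ℤ => ℂ) 2)) x) := by
  intro h
  have he : Orthonormal ℂ fun n : ℤ => (lp.single 2 n 1 : lp (fun _ : ℤ => ℂ) 2) :=
    lp.orthonormal_single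
  obtain ⟨δ, M, w, hδ, -, hw⟩ := h 1 one_pos 1 (fun _ => lp.single 2 0 1) fun _ => (he.1 0).le
  obtain ⟨m, hm⟩ := (Nat.cast_injective.tendsto_cofinite.eventually
    (he.eventually_forall_norm_inner_lt w hδ)).exists
  have hSm : ((S ^ (m : ℤ) : unitary _) : lp (fun _ : ℤ => ℂ) 2 →L[ℂ] lp (fun _ : ℤ => ℂ) 2)
      (lp.single 2 m 1) = lp.single 2 0 1 := by
    rw [zpow_natCast, SubmonoidClass.coe_pow,
      ContinuousLinearMap.pow_apply_eq_of_apply_eq_sub_one hS, sub_self]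
  have hlt := hw (lp.single 2 m 1) 0 (he.1 m).le (by simp) (by simpa using hm) m 0
  simp only [map_zero, sub_zero, hSm, inner_self_eq_norm_sq_to_K, he.1 0] at hlt
  norm_num at hlt
end

section
/- For each t ∈ ℝ let u_t be the unitary operator on L²([−π, π]) given by multiplication by the function x ↦ e^{itx}. Then the family {u_t}_{t∈ℝ}, viewed as maps from the closed unit ball of L²([−π, π]) to itself, is NOT UEC for the weak uniformity. -/
/-!
The normalized exponentials `e_n(x) = e^{inx}/√(2π)` are orthonormal in `L²([-π, π])`, so by
Bessel's inequality `e_n → 0` weakly. Weak uniform equicontinuity would then force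
`⟪u_t e_n - u_t 0, e_0⟫ → 0` uniformly in `t`; but `u_{-n} e_n = e_0`, so this inner product is
`1` for `t = -n`.
-/

open scoped InnerProductSpace

/-- Lebesgue measure restricted to the interval `[-π, π]`. -/
noncomputable def muIcc : MeasureTheory.Measure ℝ :=
  MeasureTheory.volume.restrict (Set.Icc (-Real.pi) Real.pi)

open MeasureTheory Complex Filter Topology
open scoped Real

theorem Orthonormal.tendsto_inner_atTop_zero {𝕜 E : Type*} [RCLike 𝕜] [NormedAddCommGroup E]
    [InnerProductSpace 𝕜 E] {e : ℕ → E} (he : Orthonormal 𝕜 e) (w : E) :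
    Tendsto (fun n => ⟪e n, w⟫_𝕜) atTop (𝓝 0) := by
  rw [tendsto_zero_iff_norm_tendsto_zero]
  simpa [Real.sqrt_sq (norm_nonneg _)] using
    (he.inner_products_summable (x := w)).tendsto_atTop_zero.sqrt

theorem not_uecWeak_of_tendsto_inner {H ι : Type*} [NormedAddCommGroup H] [InnerProductSpace ℂ H]
    {F : ι → H → H} {ξ η : ℕ → H} (hξ : ∀ n, ‖ξ n‖ ≤ 1) (hη : ∀ n, ‖η n‖ ≤ 1)
    (hlim : ∀ w, Tendsto (fun n => ⟪ξ n - η n, w⟫_ℂ) atTop (𝓝 0))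
    {x : H} (hx : ‖x‖ ≤ 1) {c : ℝ} (hc : 0 < c) (k : ℕ → ι)
    (hk : ∀ n, c ≤ ‖⟪F (k n) (ξ n) - F (k n) (η n), x⟫_ℂ‖) :
    ¬ UECweak F := by
  intro hF
  obtain ⟨δ, M, w, hδ, -, hw⟩ := hF c hc 1 ![x] (by simpa using hx)
  have hsmall : ∀ᶠ n in atTop, ∀ j, ‖⟪ξ n - η n, w j⟫_ℂ‖ < δ :=
    eventually_all.2 fun j =>
      (tendsto_zero_iff_norm_tendsto_zero.1 (hlim (w j))).eventually_lt_const hδ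
  obtain ⟨n, hn⟩ := hsmall.exists
  exact (hk n).not_gt (hw _ _ (hξ n) (hη n) hn (k n) 0)

theorem integral_exp_I_mul_int_mul_eq_zero (k : ℤ) (hk : k ≠ 0) (a : ℝ) :
    ∫ x in a..a + 2 * π, exp (I * k * x) = 0 := by
  have hc : I * k ≠ 0 := by simp [hk]
  rw [integral_exp_mul_complex hc]
  have hperiod : exp (I * k * ↑(a + 2 * π)) = exp (I * k * a) := by
    rw [ofReal_add, mul_add, exp_add, show I * k * ↑(2 * π) = k * (2 * π * I) by push_cast; ring,
      exp_int_mul_two_pi_mul_I, mul_one]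
  rw [hperiod, sub_self, zero_div]

instance : IsFiniteMeasure muIcc := by
  rw [muIcc]; infer_instance

theorem integral_exp_I_mul_int_mul_muIcc (k : ℤ) :
    ∫ x, exp (I * k * x) ∂muIcc = if k = 0 then 2 * π else 0 := by
  rw [muIcc, integral_Icc_eq_integral_Ioc,
    ← intervalIntegral.integral_of_le (by linarith [Real.pi_pos])]
  split_ifs with hk
  · simp [hk]
    ring
  · simpa [show -π + 2 * π = π by ring] using integral_exp_I_mul_int_mul_eq_zero k hk (-π)

noncomputable def fourierIcc (n : ℕ) (x : ℝ) : ℂ := exp (I * n * x) / √(2 * π)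

theorem norm_fourierIcc (n : ℕ) (x : ℝ) : ‖fourierIcc n x‖ = (√(2 * π))⁻¹ := by
  rw [fourierIcc, norm_div, show I * n * x = (n * x : ℝ) * I by push_cast; ring,
    norm_exp_ofReal_mul_I, norm_real, Real.norm_of_nonneg (Real.sqrt_nonneg _), one_div]

theorem memLp_fourierIcc (n : ℕ) : MemLp (fourierIcc n) 2 muIcc :=
  MemLp.of_bound (by unfold fourierIcc; fun_prop) _ (.of_forall fun x => (norm_fourierIcc n x).le)

noncomputable def fourierIccLp (n : ℕ) : Lp ℂ 2 muIcc := (memLp_fourierIcc n).toLp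

theorem fourierIcc_mul_conj_fourierIcc (m n : ℕ) (x : ℝ) :
    fourierIcc n x * starRingEnd ℂ (fourierIcc m x) =
      (2 * π : ℂ)⁻¹ * exp (I * ((n - m : ℤ) : ℂ) * x) := by
  have hconj : starRingEnd ℂ (exp (I * m * x)) = exp (-(I * m * x)) := by
    simp [← exp_conj, conj_I]
  have hsqrt : (√(2 * π) : ℂ) * √(2 * π) = 2 * π := by
    rw [← ofReal_mul, Real.mul_self_sqrt (by positivity)]
    push_cast; rfl
  rw [fourierIcc, fourierIcc, map_div₀, conj_ofReal, hconj, div_mul_div_comm, ← Complex.exp_add,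
    hsqrt, div_eq_inv_mul]
  push_cast
  ring_nf

theorem orthonormal_fourierIccLp : Orthonormal ℂ fourierIccLp := by
  refine orthonormal_iff_ite.2 fun m n => ?_
  have hinner : ⟪fourierIccLp m, fourierIccLp n⟫_ℂ =
      (2 * π : ℂ)⁻¹ * ∫ x, exp (I * ((n - m : ℤ) : ℂ) * x) ∂muIcc := by
    rw [L2.inner_def, ← integral_const_mul]
    refine integral_congr_ae ?_
    filter_upwards [(memLp_fourierIcc m).coeFn_toLp, (memLp_fourierIcc n).coeFn_toLp] with x hm hn
    rw [RCLike.inner_apply, fourierIccLp, fourierIccLp, hm, hn, fourierIcc_mul_conj_fourierIcc]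
  rw [hinner, integral_exp_I_mul_int_mul_muIcc]
  simp only [sub_eq_zero, Nat.cast_inj, eq_comm (a := n)]
  split_ifs
  · push_cast
    field_simp
  · simp

theorem not_uecWeak_mulExp_general
    (u : ℝ → (MeasureTheory.Lp ℂ 2 muIcc →L[ℂ] MeasureTheory.Lp ℂ 2 muIcc))
    (hmul : ∀ t : ℝ, ∀ g : MeasureTheory.Lp ℂ 2 muIcc,
      (u t g : ℝ → ℂ) =ᵐ[muIcc] fun x : ℝ => Complex.exp (Complex.I * t * x) * g x) :
    ¬ UECweak (fun t : ℝ => fun g : MeasureTheory.Lp ℂ 2 muIcc => u t g) := by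
  have he := orthonormal_fourierIccLp
  have hshift (n : ℕ) : u (-n) (fourierIccLp n) = fourierIccLp 0 := by
    refine Lp.ext ?_
    filter_upwards [hmul (-n) (fourierIccLp n), (memLp_fourierIcc n).coeFn_toLp,
      (memLp_fourierIcc 0).coeFn_toLp] with x hu hn h0
    rw [hu, fourierIccLp, fourierIccLp, hn, h0, fourierIcc, fourierIcc, mul_div_assoc',
      ← Complex.exp_add]
    push_cast
    ring_nf
  refine not_uecWeak_of_tendsto_inner (ξ := fourierIccLp) (η := 0) (fun n => (he.1 n).le)
    (fun _ => by simp) (by simpa using he.tendsto_inner_atTop_zero) (he.1 0).le one_pos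
    (fun n => -(n : ℝ)) fun n => ?_
  simp [hshift, he.1 0]

/-- For `t ∈ ℝ` let `u_t` be the unitary operator on `L²([-π, π])` given by multiplication
by the function `x ↦ exp(i t x)`.  Then the family `{u_t}_{t ∈ ℝ}`, viewed as maps of the
closed unit ball of `L²([-π, π])` to itself, is not UEC for the weak uniformity. -/
theorem not_uecWeak_mulExp
    (u : ℝ → (MeasureTheory.Lp ℂ 2 muIcc →L[ℂ] MeasureTheory.Lp ℂ 2 muIcc))
    (hu : ∀ t : ℝ, u t ∈ unitary (MeasureTheory.Lp ℂ 2 muIcc →L[ℂ] MeasureTheory.Lp ℂ 2 muIcc))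
    (hmul : ∀ t : ℝ, ∀ g : MeasureTheory.Lp ℂ 2 muIcc,
      (u t g : ℝ → ℂ) =ᵐ[muIcc] fun x : ℝ => Complex.exp (Complex.I * t * x) * g x) :
    ¬ UECweak (fun t : ℝ => fun g : MeasureTheory.Lp ℂ 2 muIcc => u t g) :=
  not_uecWeak_mulExp_general u hmul
end

section
/- Let H be a separable infinite-dimensional complex Hilbert space and let 𝒯 ⊆ B₁ be a family of operators of norm at most 1. Suppose there exists an orthonormal basis {e_n}_{n=1}^∞ of H such that for every n ∈ ℕ and every c > 0, the set {x ∈ F_n^⊥ : ∃ T ∈ 𝒯 with ‖P_{F_n} T x‖ ≥ c‖x‖} is contained in some finite-dimensional subspace of H, where F_n = span{e₁,…,e_n} and P_{F_n} is the orthogonal projection onto F_n. Then 𝒯, viewed as a family of maps H₁ → H₁, is UEC for the weak uniformity. -/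
/-! Write `ξ - η = y + z` with `y` the projection onto `V = W ⊔ F_n`, where `F_n` almost contains
the finitely many test vectors `x_i` and `W` is the exceptional subspace of the hypothesis for
`c = ε / 8`. Small inner products of `ξ - η` with an orthonormal basis of `V` make `y` small.
The rest `z` is orthogonal to `W` and to `F_n`, so every `T ∈ 𝒯` sends it almost orthogonally to
`F_n`; as `x_i` is almost in `F_n`, `⟪T z, x_i⟫` is small. -/

open scoped InnerProductSpace

instance finiteDimensional_span_Iio {H : Type*} [NormedAddCommGroup H]
    [InnerProductSpace ℂ H] (e : ℕ → H) (n : ℕ) :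
    FiniteDimensional ℂ (Submodule.span ℂ (e '' Set.Iio n)) :=
  FiniteDimensional.span_of_finite ℂ ((Set.finite_Iio n).image e)

open Filter Topology Submodule

section ProjectionEstimates

variable {𝕜 E : Type*} [RCLike 𝕜] [NormedAddCommGroup E] [InnerProductSpace 𝕜 E]

theorem OrthonormalBasis.norm_starProjection_le_card_mul {ι : Type*} [Fintype ι]
    {U : Submodule 𝕜 E} [U.HasOrthogonalProjection] (b : OrthonormalBasis ι 𝕜 U) {x : E}
    {δ : ℝ} (hx : ∀ i, ‖⟪x, (b i : E)⟫_𝕜‖ < δ) :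
    ‖U.starProjection x‖ ≤ Fintype.card ι * δ := by
  rw [← coe_orthogonalProjectionOnto_apply, b.orthogonalProjectionOnto_apply_eq_sum]
  calc ‖∑ i, ⟪(b i : E), x⟫_𝕜 • b i‖
      ≤ ∑ i, ‖⟪(b i : E), x⟫_𝕜 • b i‖ := norm_sum_le _ _
    _ ≤ ∑ _i : ι, δ := by
        gcongr with i
        rw [norm_smul, b.orthonormal.1 i, mul_one, norm_inner_symm]
        exact (hx i).le
    _ = Fintype.card ι * δ := by simp

theorem norm_inner_le_of_starProjection (K : Submodule 𝕜 E) [K.HasOrthogonalProjection]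
    (u x : E) :
    ‖⟪u, x⟫_𝕜‖ ≤ ‖u‖ * ‖x - K.starProjection x‖ + ‖K.starProjection u‖ * ‖x‖ := by
  have hsplit : ⟪u, x⟫_𝕜 = ⟪u, x - K.starProjection x⟫_𝕜 + ⟪K.starProjection u, x⟫_𝕜 := by
    rw [inner_starProjection_left_eq_right, inner_sub_right, sub_add_cancel]
  rw [hsplit]
  exact (norm_add_le _ _).trans (add_le_add (norm_inner_le_norm _ _) (norm_inner_le_norm _ _))

theorem norm_inner_apply_add_le (K : Submodule 𝕜 E) [K.HasOrthogonalProjection]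
    {T : E →L[𝕜] E} (hT : ‖T‖ ≤ 1) {x : E} (hx : ‖x‖ ≤ 1) (y z : E) :
    ‖⟪T (y + z), x⟫_𝕜‖ ≤ ‖y‖ + (‖z‖ * ‖x - K.starProjection x‖ + ‖K.starProjection (T z)‖) := by
  have hTle : ∀ v, ‖T v‖ ≤ ‖v‖ := fun v => by simpa using T.le_of_opNorm_le hT v
  rw [map_add, inner_add_left]
  refine (norm_add_le _ _).trans (add_le_add ?_ ?_)
  · calc ‖⟪T y, x⟫_𝕜‖ ≤ ‖T y‖ * ‖x‖ := norm_inner_le_norm _ _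
      _ ≤ ‖y‖ * 1 := by gcongr; exact hTle y
      _ = ‖y‖ := mul_one _
  · calc ‖⟪T z, x⟫_𝕜‖ ≤ ‖T z‖ * ‖x - K.starProjection x‖ + ‖K.starProjection (T z)‖ * ‖x‖ :=
          norm_inner_le_of_starProjection K _ _
      _ ≤ ‖z‖ * ‖x - K.starProjection x‖ + ‖K.starProjection (T z)‖ * 1 := by
          gcongr; exact hTle z
      _ = _ := by rw [mul_one]

theorem norm_starProjection_apply_le_of_mem_orthogonal {F W : Submodule 𝕜 E}
    [F.HasOrthogonalProjection] {T : E →L[𝕜] E} {c : ℝ}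
    (hW : ∀ x ∈ Fᗮ, c * ‖x‖ ≤ ‖F.orthogonalProjectionOnto (T x)‖ → x ∈ W)
    {z : E} (hzF : z ∈ Fᗮ) (hzW : z ∈ Wᗮ) :
    ‖F.starProjection (T z)‖ ≤ c * ‖z‖ := by
  by_contra! hlt
  have hz : z = 0 := disjoint_def.1 W.orthogonal_disjoint z (hW z hzF hlt.le) hzW
  simp [hz] at hlt

end ProjectionEstimates

theorem HilbertBasis.eventually_norm_sub_starProjection_span_Iio_lt {H : Type*}
    [NormedAddCommGroup H] [InnerProductSpace ℂ H] (e : HilbertBasis ℕ ℂ H) (x : H) {ε : ℝ}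
    (hε : 0 < ε) :
    ∀ᶠ n in atTop, ‖x - (span ℂ (e '' Set.Iio n)).starProjection x‖ < ε := by
  have hmono : Monotone fun n => span ℂ (e '' Set.Iio n) := fun m n hmn =>
    span_mono (Set.image_mono (Set.Iio_subset_Iio hmn))
  have hdense : ⊤ ≤ (⨆ n, span ℂ (e '' Set.Iio n)).topologicalClosure := by
    rw [← span_iUnion, ← Set.image_iUnion, Set.iUnion_Iio, Set.image_univ, e.dense_span]
  have := (starProjection_tendsto_self _ hmono x hdense).const_sub x
  rw [sub_self] at this
  simpa using (tendsto_norm_zero.comp this).eventually (gt_mem_nhds hε)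

theorem uecWeak_of_proj_condition_basis_general {H : Type*} [NormedAddCommGroup H]
    [InnerProductSpace ℂ H]
    (𝒯 : Set (H →L[ℂ] H)) (h𝒯 : ∀ T ∈ 𝒯, ‖T‖ ≤ 1)
    (e : HilbertBasis ℕ ℂ H)
    (hcond : ∀ (n : ℕ) (c : ℝ), 0 < c →
      ∃ W : Submodule ℂ H, FiniteDimensional ℂ W ∧
        ∀ x ∈ (Submodule.span ℂ (⇑e '' Set.Iio n))ᗮ,
          (∃ T ∈ 𝒯, c * ‖x‖ ≤
            ‖(Submodule.orthogonalProjectionOnto (Submodule.span ℂ (⇑e '' Set.Iio n))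
                ((T : H →L[ℂ] H) x) : Submodule.span ℂ (⇑e '' Set.Iio n))‖) →
          x ∈ W) :
    UECweak (fun T : 𝒯 => fun ξ : H => (T : H →L[ℂ] H) ξ) := by
  intro ε hε N x hx
  have hε8 : 0 < ε / 8 := by positivity
  obtain ⟨n, hxF⟩ := (eventually_all.2 fun i =>
    e.eventually_norm_sub_starProjection_span_Iio_lt (x i) hε8).exists
  set F := span ℂ (e '' Set.Iio n)
  obtain ⟨W, hWfin, hW⟩ := hcond n (ε / 8) hε8
  set V := W ⊔ F
  let b := stdOrthonormalBasis ℂ V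
  set m := Module.finrank ℂ V
  refine ⟨ε / 8 / (m + 1), m, fun j => b j, by positivity, fun j => (b.orthonormal.1 j).le, ?_⟩
  intro ξ η hξ hη hξη T i
  set y := V.starProjection (ξ - η)
  set z := Vᗮ.starProjection (ξ - η)
  have hy : ‖y‖ ≤ ε / 8 := calc
    ‖y‖ ≤ m * (ε / 8 / (m + 1)) := by simpa only [Fintype.card_fin] using b.norm_starProjection_le_card_mul hξη
    _ ≤ (m + 1) * (ε / 8 / (m + 1)) := by gcongr; linarith
    _ = ε / 8 := mul_div_cancel₀ _ (by positivity)
  have hz : ‖z‖ ≤ 2 := (norm_starProjection_apply_le _ _).trans <|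
    (norm_sub_le ξ η).trans (by linarith)
  have hzV : z ∈ Vᗮ := starProjection_apply_mem _ _
  have hPz : ‖F.starProjection (T.1 z)‖ ≤ ε / 8 * ‖z‖ :=
    norm_starProjection_apply_le_of_mem_orthogonal (fun v hv h => hW v hv ⟨T, T.2, h⟩)
      (orthogonal_le le_sup_right hzV) (orthogonal_le le_sup_left hzV)
  calc ‖⟪T.1 ξ - T.1 η, x i⟫_ℂ‖ = ‖⟪T.1 (y + z), x i⟫_ℂ‖ := by
        rw [starProjection_add_starProjection_orthogonal, map_sub]
    _ ≤ ‖y‖ + (‖z‖ * ‖x i - F.starProjection (x i)‖ + ‖F.starProjection (T.1 z)‖) :=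
        norm_inner_apply_add_le F (h𝒯 T T.2) (hx i) y z
    _ ≤ ε / 8 + (2 * (ε / 8) + ε / 8 * 2) := by
        gcongr
        · exact (hxF i).le
        · exact hPz.trans (by gcongr)
    _ < ε := by linarith

/-- Let `H` be a separable infinite-dimensional complex Hilbert space and let `𝒯 ⊆ B₁` be
a family of operators of norm at most `1`.  Suppose there is an orthonormal basis
`{e_n}` of `H` such that for every `n` and every `c > 0`, the set
`{x ∈ F_nᗮ : ∃ T ∈ 𝒯, ‖P_{F_n} T x‖ ≥ c ‖x‖}` is contained in some finite-dimensional
subspace, where `F_n` is the span of the first `n` basis vectors.  Then `𝒯`, viewed as a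
family of maps `H₁ → H₁`, is UEC for the weak uniformity. -/
theorem uecWeak_of_proj_condition_basis {H : Type*} [NormedAddCommGroup H]
    [InnerProductSpace ℂ H] [CompleteSpace H] [TopologicalSpace.SeparableSpace H]
    (hinf : ¬ FiniteDimensional ℂ H)
    (𝒯 : Set (H →L[ℂ] H)) (h𝒯 : ∀ T ∈ 𝒯, ‖T‖ ≤ 1)
    (e : HilbertBasis ℕ ℂ H)
    (hcond : ∀ (n : ℕ) (c : ℝ), 0 < c →
      ∃ W : Submodule ℂ H, FiniteDimensional ℂ W ∧
        ∀ x ∈ (Submodule.span ℂ (⇑e '' Set.Iio n))ᗮ,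
          (∃ T ∈ 𝒯, c * ‖x‖ ≤
            ‖(Submodule.orthogonalProjectionOnto (Submodule.span ℂ (⇑e '' Set.Iio n))
                ((T : H →L[ℂ] H) x) : Submodule.span ℂ (⇑e '' Set.Iio n))‖) →
          x ∈ W) :
    UECweak (fun T : 𝒯 => fun ξ : H => (T : H →L[ℂ] H) ξ) :=
  uecWeak_of_proj_condition_basis_general 𝒯 h𝒯 e hcond
end

section
/- Let H be a separable infinite-dimensional complex Hilbert space and let 𝒯 ⊆ B₁ be a family of operators of norm at most 1. Suppose there exist an orthonormal basis {e_n}_{n=1}^∞ of H and a number K ∈ ℕ such that for every N ∈ ℕ, every T ∈ 𝒯, and every h in the closed linear span of {e_{N+K}, e_{N+K+1}, …}, the vector T h is orthogonal to span{e₁,…,e_N}. Then 𝒯, viewed as a family of maps H₁ → H₁, is UEC for the weak uniformity. -/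
open scoped InnerProductSpace

/-!
Write `z = ξ - η` and let `P n` be the partial-sum projection onto `e 0, …, e (n - 1)`.
Testing against `w_j = e j` for `j < M` makes `P M z` small in norm, while `z - P M z` lies in
the closed span of `e M, e (M + 1), …`, so every `T ∈ 𝒯` maps it orthogonally to
`e 0, …, e (m - 1)` as soon as `m + K ≤ M`. Hence
`⟪T z, x⟫ = ⟪T z, x - P m x⟫ + ⟪T (P M z), P m x⟫`, and both terms are small uniformly in `T`
once `m` is chosen with `‖x - P m x‖` small for each of the finitely many `x_i`.
-/

open Submodule

theorem Orthonormal.norm_sum_inner_smul_le {𝕜 E ι : Type*} [RCLike 𝕜] [NormedAddCommGroup E]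
    [InnerProductSpace 𝕜 E] {v : ι → E} (hv : Orthonormal 𝕜 v) (s : Finset ι) (x : E) :
    ‖∑ i ∈ s, ⟪v i, x⟫_𝕜 • v i‖ ≤ ‖x‖ := by
  have hsq : ‖∑ i ∈ s, ⟪v i, x⟫_𝕜 • v i‖ ^ 2 = ∑ i ∈ s, ‖⟪v i, x⟫_𝕜‖ ^ 2 := by
    refine RCLike.ofReal_injective (K := 𝕜) ?_
    push_cast
    rw [← inner_self_eq_norm_sq_to_K, hv.inner_sum]
    simp only [RCLike.conj_mul]
  exact (sq_le_sq₀ (norm_nonneg _) (norm_nonneg _)).1 (hsq ▸ hv.sum_inner_products_le x)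

namespace HilbertBasis

variable {𝕜 E : Type*} [RCLike 𝕜] [NormedAddCommGroup E] [InnerProductSpace 𝕜 E]
  (e : HilbertBasis ℕ 𝕜 E)

theorem toSchauderBasis_proj_apply (n : ℕ) (x : E) :
    e.toSchauderBasis.proj n x = ∑ i ∈ Finset.range n, ⟪e i, x⟫_𝕜 • e i := by
  simp

theorem norm_toSchauderBasis_proj_apply_le (n : ℕ) (x : E) :
    ‖e.toSchauderBasis.proj n x‖ ≤ ‖x‖ := by
  simpa only [toSchauderBasis_proj_apply] using e.orthonormal.norm_sum_inner_smul_le _ x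

theorem norm_toSchauderBasis_proj_apply_le_of_norm_inner_le {n : ℕ} {x : E} {δ : ℝ}
    (h : ∀ i < n, ‖⟪e i, x⟫_𝕜‖ ≤ δ) : ‖e.toSchauderBasis.proj n x‖ ≤ n * δ := by
  rw [toSchauderBasis_proj_apply]
  calc ‖∑ i ∈ Finset.range n, ⟪e i, x⟫_𝕜 • e i‖
      ≤ ∑ i ∈ Finset.range n, ‖⟪e i, x⟫_𝕜 • e i‖ := norm_sum_le _ _
    _ ≤ ∑ _i ∈ Finset.range n, δ := Finset.sum_le_sum fun i hi ↦ by
        rw [norm_smul, e.orthonormal.norm_eq_one, mul_one]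
        exact h i (Finset.mem_range.1 hi)
    _ = n * δ := by simp

theorem inner_toSchauderBasis_proj_eq_zero {n : ℕ} {y : E} (h : ∀ i < n, ⟪y, e i⟫_𝕜 = 0)
    (x : E) : ⟪y, e.toSchauderBasis.proj n x⟫_𝕜 = 0 := by
  rw [toSchauderBasis_proj_apply, inner_sum]
  exact Finset.sum_eq_zero fun i hi ↦ by
    rw [inner_smul_right, h i (Finset.mem_range.1 hi), mul_zero]

theorem sub_toSchauderBasis_proj_mem_closure_span (n : ℕ) (x : E) :
    x - e.toSchauderBasis.proj n x ∈ (span 𝕜 (e '' {i | n ≤ i})).topologicalClosure := by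
  have htail : HasSum (fun i : {i // i ∉ Finset.range n} => ⟪e i, x⟫_𝕜 • e i)
      (x - e.toSchauderBasis.proj n x) := by
    rw [toSchauderBasis_proj_apply]
    refine (Finset.hasSum_iff_compl _).1 ?_
    simpa only [e.repr_apply_apply] using e.hasSum_repr x
  refine isClosed_topologicalClosure _ |>.mem_of_tendsto htail (.of_forall fun s ↦ ?_)
  refine sum_mem fun i _ ↦ smul_mem _ _ (le_topologicalClosure _ (subset_span ?_))
  exact ⟨i, by simpa using i.2, rfl⟩

theorem exists_norm_sub_toSchauderBasis_proj_lt (x : E) {ε : ℝ} (hε : 0 < ε) :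
    ∃ n, ‖x - e.toSchauderBasis.proj n x‖ < ε := by
  obtain ⟨n, hn⟩ :=
    ((e.toSchauderBasis.tendsto_proj x).eventually (Metric.ball_mem_nhds x hε)).exists
  exact ⟨n, by rwa [dist_comm, dist_eq_norm] at hn⟩

theorem norm_inner_apply_le_of_tail_orthogonal (T : E →L[𝕜] E) {m M : ℕ}
    (hT : ∀ h ∈ (span 𝕜 (e '' {i | M ≤ i})).topologicalClosure, ∀ i < m, ⟪T h, e i⟫_𝕜 = 0)
    (z x : E) :
    ‖⟪T z, x⟫_𝕜‖ ≤ ‖T‖ * (‖z‖ * ‖x - e.toSchauderBasis.proj m x‖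
      + ‖e.toSchauderBasis.proj M z‖ * ‖x‖) := by
  set P := e.toSchauderBasis.proj
  have hsplit : ⟪T z, x⟫_𝕜 = ⟪T z, x - P m x⟫_𝕜 + ⟪T (P M z), P m x⟫_𝕜 := by
    have htail : ⟪T (z - P M z), P m x⟫_𝕜 = 0 :=
      e.inner_toSchauderBasis_proj_eq_zero
        (hT _ (e.sub_toSchauderBasis_proj_mem_closure_span M z)) x
    rw [map_sub, inner_sub_left, sub_eq_zero] at htail
    rw [← htail, ← inner_add_right, sub_add_cancel]
  calc ‖⟪T z, x⟫_𝕜‖ ≤ ‖T z‖ * ‖x - P m x‖ + ‖T (P M z)‖ * ‖P m x‖ := by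
        rw [hsplit]
        exact (norm_add_le _ _).trans
          (add_le_add (norm_inner_le_norm _ _) (norm_inner_le_norm _ _))
    _ ≤ ‖T‖ * ‖z‖ * ‖x - P m x‖ + ‖T‖ * ‖P M z‖ * ‖x‖ := by
        gcongr
        · exact T.le_opNorm z
        · exact T.le_opNorm _
        · exact e.norm_toSchauderBasis_proj_apply_le m x
    _ = _ := by ring

end HilbertBasis

theorem uecWeak_of_lower_triangular_general {H : Type*} [NormedAddCommGroup H]
    [InnerProductSpace ℂ H]
    (𝒯 : Set (H →L[ℂ] H)) (h𝒯 : ∀ T ∈ 𝒯, ‖T‖ ≤ 1)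
    (e : HilbertBasis ℕ ℂ H) (K : ℕ)
    (horth : ∀ N : ℕ, ∀ T ∈ 𝒯,
      ∀ h ∈ (Submodule.span ℂ (⇑e '' {i : ℕ | N + K ≤ i})).topologicalClosure,
        ∀ i < N, ⟪(T : H →L[ℂ] H) h, e i⟫_ℂ = 0) :
    UECweak (fun T : 𝒯 => fun ξ : H => (T : H →L[ℂ] H) ξ) := by
  intro ε hε N x hx
  choose m hm using fun i ↦
    e.exists_norm_sub_toSchauderBasis_proj_lt (x i) (by positivity : 0 < ε / 4)
  set M := Finset.univ.sup m + K
  have hMδ : M * (ε / (2 * (M + 1))) < ε / 2 := by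
    rw [mul_div_assoc', div_lt_div_iff₀ (by positivity) two_pos]
    nlinarith
  refine ⟨ε / (2 * (M + 1)), M, fun j ↦ e j, by positivity,
    fun j ↦ (e.orthonormal.norm_eq_one j).le, ?_⟩
  intro ξ η hξ hη hsmall T i
  have hz : ‖ξ - η‖ ≤ 2 := (norm_sub_le _ _).trans (by linarith)
  have hPz : ‖e.toSchauderBasis.proj M (ξ - η)‖ < ε / 2 := by
    refine (e.norm_toSchauderBasis_proj_apply_le_of_norm_inner_le fun j hj ↦ ?_).trans_lt hMδ
    rw [norm_inner_symm]
    exact (hsmall ⟨j, hj⟩).le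
  have hmM : m i + K ≤ M := Nat.add_le_add_right (Finset.le_sup (Finset.mem_univ i)) K
  have htail : ∀ h ∈ (span ℂ (e '' {j | M ≤ j})).topologicalClosure, ∀ j < m i,
      ⟪T.1 h, e j⟫_ℂ = 0 := fun h hh ↦
    horth (m i) T T.2 h (topologicalClosure_mono (span_mono
      (Set.image_mono fun j (hj : M ≤ j) ↦ hmM.trans hj)) hh)
  have hT := e.norm_inner_apply_le_of_tail_orthogonal T.1 htail (ξ - η) (x i)
  show ‖⟪T.1 ξ - T.1 η, x i⟫_ℂ‖ < ε
  rw [← map_sub]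
  calc ‖⟪T.1 (ξ - η), x i⟫_ℂ‖
      ≤ 1 * (2 * ‖x i - e.toSchauderBasis.proj (m i) (x i)‖
        + ‖e.toSchauderBasis.proj M (ξ - η)‖ * 1) := by
        refine hT.trans ?_
        gcongr
        exacts [h𝒯 _ T.2, hx i]
    _ < ε := by linarith [hm i]

/-- Let `H` be a separable infinite-dimensional complex Hilbert space and let `𝒯 ⊆ B₁` be
a family of operators of norm at most `1`.  Suppose there exist an orthonormal basis
`{e_n}` of `H` and `K ∈ ℕ` such that for every `N`, every `T ∈ 𝒯` and every `h` in the
closed linear span of `{e_{N+K}, e_{N+K+1}, …}`, the vector `T h` is orthogonal to the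
span of the first `N` basis vectors.  Then `𝒯`, viewed as a family of maps `H₁ → H₁`, is
UEC for the weak uniformity. -/
theorem uecWeak_of_lower_triangular {H : Type*} [NormedAddCommGroup H]
    [InnerProductSpace ℂ H] [CompleteSpace H] [TopologicalSpace.SeparableSpace H]
    (hinf : ¬ FiniteDimensional ℂ H)
    (𝒯 : Set (H →L[ℂ] H)) (h𝒯 : ∀ T ∈ 𝒯, ‖T‖ ≤ 1)
    (e : HilbertBasis ℕ ℂ H) (K : ℕ)
    (horth : ∀ N : ℕ, ∀ T ∈ 𝒯,
      ∀ h ∈ (Submodule.span ℂ (⇑e '' {i : ℕ | N + K ≤ i})).topologicalClosure,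
        ∀ i < N, ⟪(T : H →L[ℂ] H) h, e i⟫_ℂ = 0) :
    UECweak (fun T : 𝒯 => fun ξ : H => (T : H →L[ℂ] H) ξ) :=
  uecWeak_of_lower_triangular_general 𝒯 h𝒯 e K horth
end

section
/- Let S_r be the right unilateral shift on ℓ²(ℕ) (the isometry determined by S_r e_n = e_{n+1} on the standard orthonormal basis {e_n}_{n∈ℕ}). Then the family of powers {S_r^n}_{n∈ℕ}, viewed as maps from the closed unit ball of ℓ²(ℕ) to itself, is UEC for the weak uniformity. -/
open scoped InnerProductSpace ENNReal
open Filter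

/-- Let `S_r` be the right unilateral shift on `ℓ²(ℕ)`, the isometry determined by
`S_r e_n = e_{n+1}` on the standard orthonormal basis `{e_n}_{n ∈ ℕ}`.  Then the family of
powers `{S_r^n}_{n ∈ ℕ}`, viewed as maps of the closed unit ball of `ℓ²(ℕ)` to itself, is
UEC for the weak uniformity. -/
theorem uecWeak_rightShift_powers
    (S : (lp (fun _ : ℕ => ℂ) 2) →L[ℂ] (lp (fun _ : ℕ => ℂ) 2))
    (hiso : ∀ x : lp (fun _ : ℕ => ℂ) 2, ‖S x‖ = ‖x‖)
    (hS : ∀ n : ℕ, S (lp.single 2 n 1) = lp.single 2 (n + 1) 1) :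
    UECweak (fun n : ℕ => fun x : lp (fun _ : ℕ => ℂ) 2 => (S ^ n) x) := by
  intro ε hε N x hx
  set A := ContinuousLinearMap.adjoint S with hAdef
  -- coordinates of the adjoint (left shift)
  have hAcoord : ∀ (y : lp (fun _ : ℕ => ℂ) 2) (n : ℕ), (A y) n = y (n + 1) := by
    intro y n
    have h1 : ⟪lp.single 2 n (1 : ℂ), A y⟫_ℂ = (A y) n := by
      rw [lp.inner_single_left]; simp
    rw [← h1, hAdef, ContinuousLinearMap.adjoint_inner_right, hS, lp.inner_single_left]
    simp
  have hApowcoord : ∀ (k : ℕ) (y : lp (fun _ : ℕ => ℂ) 2) (n : ℕ),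
      ((A ^ k) y) n = y (n + k) := by
    intro k
    induction k with
    | zero => intro y n; simp
    | succ k ih =>
        intro y n
        rw [pow_succ, ContinuousLinearMap.mul_apply, ih, hAcoord, ← Nat.add_assoc]
  -- the adjoint is a contraction
  have hAnorm : ∀ y : lp (fun _ : ℕ => ℂ) 2, ‖A y‖ ≤ ‖y‖ := by
    intro y
    calc ‖A y‖ ≤ ‖A‖ * ‖y‖ := A.le_opNorm y
      _ ≤ 1 * ‖y‖ := by
          gcongr
          rw [hAdef, ContinuousLinearMap.adjoint.norm_map]
          exact S.opNorm_le_bound zero_le_one (fun v => by rw [hiso, one_mul])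
      _ = ‖y‖ := one_mul _
  have hApow : ∀ (k : ℕ) (y : lp (fun _ : ℕ => ℂ) 2), ‖(A ^ k) y‖ ≤ ‖y‖ := by
    intro k
    induction k with
    | zero => intro y; simp
    | succ k ih =>
        intro y
        rw [pow_succ, ContinuousLinearMap.mul_apply]
        exact (ih (A y)).trans (hAnorm y)
  -- adjoint identity for powers
  have hkey : ∀ (k : ℕ) (v y : lp (fun _ : ℕ => ℂ) 2),
      ⟪(S ^ k) v, y⟫_ℂ = ⟪v, (A ^ k) y⟫_ℂ := by
    intro k
    induction k with
    | zero => intro v y; simp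
    | succ k ih =>
        intro v y
        rw [pow_succ, ContinuousLinearMap.mul_apply, ih,
          ← ContinuousLinearMap.adjoint_inner_right, ← hAdef,
          ← ContinuousLinearMap.mul_apply, ← pow_succ']
  -- summability of squared coordinates
  have hsum : ∀ i : Fin N, Summable (fun n : ℕ => ‖x i n‖ ^ ((2 : ℝ≥0∞)).toReal) := by
    intro i
    exact (lp.memℓp (x i)).summable (by norm_num)
  -- tails tend to zero, uniformly over the finitely many `x i`
  have htail : ∀ᶠ k in atTop, ∀ i : Fin N,
      (∑' n : ℕ, ‖x i (n + k)‖ ^ ((2 : ℝ≥0∞)).toReal) < (ε / 4) ^ ((2 : ℝ≥0∞)).toReal := by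
    rw [eventually_all]
    intro i
    have := tendsto_sum_nat_add (fun n => ‖x i n‖ ^ ((2 : ℝ≥0∞)).toReal)
    exact this.eventually (gt_mem_nhds (by
      have : (0:ℝ) < (ε / 4) ^ ((2 : ℝ≥0∞)).toReal := by
        apply Real.rpow_pos_of_pos; linarith
      exact this))
  obtain ⟨K, hK⟩ := htail.exists
  -- norm bound at level K
  have hnormK : ∀ i : Fin N, ‖(A ^ K) (x i)‖ < ε / 4 := by
    intro i
    have h1 : ‖(A ^ K) (x i)‖ ^ ((2 : ℝ≥0∞)).toReal
        = ∑' n : ℕ, ‖x i (n + K)‖ ^ ((2 : ℝ≥0∞)).toReal := by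
      rw [lp.norm_rpow_eq_tsum (by norm_num) ((A ^ K) (x i))]
      exact tsum_congr fun n => by rw [hApowcoord]
    have h2 : ‖(A ^ K) (x i)‖ ^ ((2 : ℝ≥0∞)).toReal < (ε / 4) ^ ((2 : ℝ≥0∞)).toReal := by
      rw [h1]; exact hK i
    have h3 : ((2 : ℝ≥0∞)).toReal = (2 : ℝ) := by norm_num
    rw [h3, show (2:ℝ) = ((2:ℕ):ℝ) by norm_num, Real.rpow_natCast, Real.rpow_natCast] at h2
    exact lt_of_pow_lt_pow_left₀ 2 (by linarith) h2
  -- norm bound for all k ≥ K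
  have hnormk : ∀ i : Fin N, ∀ k, K ≤ k → ‖(A ^ k) (x i)‖ < ε / 4 := by
    intro i k hk
    have : (A ^ k) (x i) = (A ^ (k - K)) ((A ^ K) (x i)) := by
      rw [← ContinuousLinearMap.mul_apply, pow_sub_mul_pow A hk]
    rw [this]
    exact lt_of_le_of_lt (hApow _ _) (hnormK i)
  refine ⟨ε, N * K, fun j =>
    (A ^ ((finProdFinEquiv.symm j).2 : ℕ)) (x (finProdFinEquiv.symm j).1), hε, ?_, ?_⟩
  · intro j
    exact (hApow _ _).trans (hx _)
  · intro ξ η hξ hη hw k i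
    simp only []
    have heq : ⟪(S ^ k) ξ - (S ^ k) η, x i⟫_ℂ = ⟪ξ - η, (A ^ k) (x i)⟫_ℂ := by
      rw [← map_sub, hkey]
    rw [heq]
    rcases lt_or_ge k K with hkK | hkK
    · have := hw (finProdFinEquiv (i, ⟨k, hkK⟩))
      simp only [Equiv.symm_apply_apply] at this
      exact this
    · calc ‖⟪ξ - η, (A ^ k) (x i)⟫_ℂ‖ ≤ ‖ξ - η‖ * ‖(A ^ k) (x i)‖ := norm_inner_le_norm _ _
        _ ≤ 2 * ‖(A ^ k) (x i)‖ := by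
            gcongr
            calc ‖ξ - η‖ ≤ ‖ξ‖ + ‖η‖ := norm_sub_le _ _
              _ ≤ 2 := by linarith
        _ < 2 * (ε / 4) := by
            have := hnormk i k hkK
            nlinarith
        _ < ε := by linarith
end

section
/- There exists a complex Hilbert space H and a family 𝒯 of operators on H of norm at most 1 such that 𝒯, viewed as a family of maps H₁ → H₁, is UEC for the weak uniformity, while the family of adjoints 𝒯* = {T* : T ∈ 𝒯} is NOT UEC for the weak uniformity. (Concretely, one may take H = ℓ²(ℕ) and 𝒯 = {S_r^n}_{n∈ℕ}, the powers of the right unilateral shift.) -/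
/-! The right shifts `Sⁿ` on `ℓ²(ℕ)` are contractions whose adjoints `S*ⁿ = leftShift n` tend
strongly to `0`. As `⟪Sⁿ ξ - Sⁿ η, x⟫ = ⟪ξ - η, S*ⁿ x⟫`, Cauchy–Schwarz makes this small for all
but finitely many `n`, and the finitely many remaining vectors `S*ⁿ xᵢ` serve as test vectors.
The adjoints are not UEC: `S*ⁿ eₙ = e₀` although `eₙ → 0` weakly, so no finite set of test
vectors separates `eₙ` from `0`. -/

open scoped InnerProductSpace

open Filter Topology
open scoped lp
open ContinuousLinearMap (adjoint)

namespace lp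

variable {α E : Type*} [NormedAddCommGroup E]

theorem norm_sq_eq_tsum_norm_sq (f : ℓ²(α, E)) : ‖f‖ ^ 2 = ∑' i, ‖f i‖ ^ 2 := by
  simpa using lp.norm_rpow_eq_tsum (by norm_num) f

theorem summable_norm_sq (f : ℓ²(α, E)) : Summable fun i => ‖f i‖ ^ 2 := by
  simpa using (lp.memℓp f).summable (by norm_num)

theorem tendsto_cofinite_zero (f : ℓ²(α, E)) : Tendsto (⇑f) cofinite (𝓝 0) := by
  rw [tendsto_zero_iff_norm_tendsto_zero]
  simpa [Real.sqrt_sq (norm_nonneg _)] using (summable_norm_sq f).tendsto_cofinite_zero.sqrt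

end lp

section LeftShift

variable (𝕜 E : Type*) [NontriviallyNormedField 𝕜] [NormedAddCommGroup E] [NormedSpace 𝕜 E]

noncomputable def leftShift (n : ℕ) : ℓ²(ℕ, E) →L[𝕜] ℓ²(ℕ, E) :=
  LinearMap.mkContinuous
    { toFun f := ⟨fun k => f (k + n), memℓp_gen <| (summable_nat_add_iff n).2 <|
        (lp.memℓp f).summable (by norm_num)⟩
      map_add' _ _ := rfl
      map_smul' _ _ := rfl }
    1 fun f => by
      rw [one_mul]
      refine lp.norm_le_of_tsum_le (by norm_num) (norm_nonneg f) ?_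
      rw [lp.norm_rpow_eq_tsum (by norm_num) f]
      exact tsum_comp_le_tsum_of_inj ((lp.memℓp f).summable (by norm_num))
        (fun _ => by positivity) (add_left_injective n)

variable {𝕜 E}

@[simp]
theorem leftShift_apply (n : ℕ) (f : ℓ²(ℕ, E)) (k : ℕ) : leftShift 𝕜 E n f k = f (k + n) := rfl

theorem norm_leftShift_apply_sq (n : ℕ) (f : ℓ²(ℕ, E)) :
    ‖leftShift 𝕜 E n f‖ ^ 2 = ∑' k, ‖f (k + n)‖ ^ 2 := by
  rw [lp.norm_sq_eq_tsum_norm_sq]; rfl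

theorem norm_leftShift_le (n : ℕ) : ‖leftShift 𝕜 E n‖ ≤ 1 :=
  LinearMap.mkContinuous_norm_le _ zero_le_one _

theorem tendsto_norm_leftShift_apply (f : ℓ²(ℕ, E)) :
    Tendsto (fun n => ‖leftShift 𝕜 E n f‖) atTop (𝓝 0) := by
  have hsq : Tendsto (fun n => ‖leftShift 𝕜 E n f‖ ^ 2) atTop (𝓝 0) := by
    simpa only [norm_leftShift_apply_sq] using tendsto_sum_nat_add fun k => ‖f k‖ ^ 2
  simpa [Real.sqrt_sq (norm_nonneg _)] using hsq.sqrt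

theorem leftShift_single (n : ℕ) (a : E) : leftShift 𝕜 E n (lp.single 2 n a) = lp.single 2 0 a := by
  ext k
  simp [lp.single_apply, Pi.single_apply]

end LeftShift

section UECweak

variable {H : Type*} [NormedAddCommGroup H] [InnerProductSpace ℂ H] {ι κ : Type*}

theorem UECweak.of_forall_exists_eq {F : ι → H → H} {G : κ → H → H} (hF : UECweak F)
    (hG : ∀ k, ∃ i, G k = F i) : UECweak G := by
  intro ε hε N x hx
  obtain ⟨δ, M, w, hδ, hw, hFw⟩ := hF ε hε N x hx
  refine ⟨δ, M, w, hδ, hw, fun ξ η hξ hη hξη k i => ?_⟩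
  obtain ⟨j, hj⟩ := hG k
  rw [hj]
  exact hFw ξ η hξ hη hξη j i

theorem uecWeak_of_tendsto_norm_adjoint_apply [CompleteSpace H] (T : ι → H →L[ℂ] H)
    (hT : ∀ k, ‖T k‖ ≤ 1) (h_adj : ∀ x, Tendsto (fun k => ‖adjoint (T k) x‖) cofinite (𝓝 0)) :
    UECweak fun k ξ => T k ξ := by
  intro ε hε N x hx
  have hsmall : ∀ i, {k | ε / 4 ≤ ‖adjoint (T k) (x i)‖}.Finite := fun i => by
    simpa only [not_lt] using
      eventually_cofinite.1 ((h_adj (x i)).eventually_lt_const (by positivity))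
  have hW : (⋃ i, (fun k => adjoint (T k) (x i)) '' {k | ε / 4 ≤ ‖adjoint (T k) (x i)‖}).Finite :=
    Set.finite_iUnion fun i => (hsmall i).image _
  obtain ⟨M, w, hw⟩ := hW.fin_embedding
  have h_adj_le : ∀ k i, ‖adjoint (T k) (x i)‖ ≤ 1 := fun k i =>
    ((adjoint (T k)).le_opNorm _).trans <| by
      rw [LinearIsometryEquiv.norm_map]
      exact mul_le_one₀ (hT k) (norm_nonneg _) (hx i)
  refine ⟨ε, M, w, hε, fun j => ?_, fun ξ η hξ hη hξη k i => ?_⟩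
  · obtain ⟨i, k, -, hk⟩ := Set.mem_iUnion.1 (hw ▸ Set.mem_range_self j : w j ∈ _)
    exact hk ▸ h_adj_le k i
  · rw [← map_sub, ← ContinuousLinearMap.adjoint_inner_right]
    by_cases hk : ε / 4 ≤ ‖adjoint (T k) (x i)‖
    · obtain ⟨j, hj⟩ : adjoint (T k) (x i) ∈ Set.range w := hw ▸ Set.mem_iUnion.2 ⟨i, k, hk, rfl⟩
      exact hj ▸ hξη j
    · calc ‖⟪ξ - η, adjoint (T k) (x i)⟫_ℂ‖ ≤ ‖ξ - η‖ * ‖adjoint (T k) (x i)‖ :=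
            norm_inner_le_norm _ _
        _ ≤ 2 * (ε / 4) := by
            gcongr
            · exact (norm_sub_le ξ η).trans (by linarith)
            · exact (not_le.1 hk).le
        _ < ε := by linarith

theorem not_uecWeak_of_tendsto_inner_s13 {α : Type*} {l : Filter α} [l.NeBot] {F : ι → H → H}
    (ξ η : α → H) (hξ : ∀ a, ‖ξ a‖ ≤ 1) (hη : ∀ a, ‖η a‖ ≤ 1)
    (hweak : ∀ w, Tendsto (fun a => ⟪ξ a - η a, w⟫_ℂ) l (𝓝 0)) (k : α → ι) (x : H)
    (hx : ‖x‖ ≤ 1) {ε : ℝ} (hε : 0 < ε) (hsep : ∀ a, ε ≤ ‖⟪F (k a) (ξ a) - F (k a) (η a), x⟫_ℂ‖) :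
    ¬ UECweak F := by
  intro hF
  obtain ⟨δ, M, w, hδ, -, hFw⟩ := hF ε hε 1 (fun _ => x) (fun _ => hx)
  have hclose : ∀ᶠ a in l, ∀ j, ‖⟪ξ a - η a, w j⟫_ℂ‖ < δ :=
    eventually_all.2 fun j => (hweak (w j)).norm.eventually_lt_const (by simpa using hδ)
  obtain ⟨a, ha⟩ := hclose.exists
  exact (hsep a).not_gt (hFw (ξ a) (η a) (hξ a) (hη a) ha (k a) 0)

end UECweak

/-- There exist a complex Hilbert space `H` and a family `𝒯` of operators on `H` of norm
at most `1` such that `𝒯`, viewed as a family of maps `H₁ → H₁`, is UEC for the weak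
uniformity, while the family of adjoints `𝒯* = {T* : T ∈ 𝒯}` is not UEC for the weak
uniformity.  (One may take `H = ℓ²(ℕ)` and `𝒯` the powers of the right unilateral
shift.) -/
theorem exists_uecWeak_family_with_adjoints_not_uecWeak :
    ∃ (H : Type) (_ : NormedAddCommGroup H) (_ : InnerProductSpace ℂ H) (_ : CompleteSpace H)
      (𝒯 : Set (H →L[ℂ] H)),
      (∀ T ∈ 𝒯, ‖T‖ ≤ 1) ∧
      UECweak (fun T : 𝒯 => fun ξ : H => (T : H →L[ℂ] H) ξ) ∧
      ¬ UECweak (fun T : 𝒯 => fun ξ : H =>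
          (ContinuousLinearMap.adjoint (T : H →L[ℂ] H)) ξ) := by
  let S : ℕ → ℓ²(ℕ, ℂ) →L[ℂ] ℓ²(ℕ, ℂ) := fun n => adjoint (leftShift ℂ ℂ n)
  have hS : ∀ n, ‖S n‖ ≤ 1 := fun n =>
    (LinearIsometryEquiv.norm_map _ _).trans_le (norm_leftShift_le n)
  refine ⟨ℓ²(ℕ, ℂ), inferInstance, inferInstance, inferInstance, Set.range S, ?_, ?_, ?_⟩
  · rintro _ ⟨n, rfl⟩
    exact hS n
  · refine UECweak.of_forall_exists_eq (uecWeak_of_tendsto_norm_adjoint_apply S hS fun x => ?_) ?_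
    · simpa only [S, ContinuousLinearMap.adjoint_adjoint, Nat.cofinite_eq_atTop]
        using tendsto_norm_leftShift_apply x
    · rintro ⟨_, n, rfl⟩
      exact ⟨n, rfl⟩
  · refine not_uecWeak_of_tendsto_inner_s13 (l := atTop) (fun n => lp.single 2 n 1) 0
      (fun n => (lp.norm_single two_pos n 1).trans_le norm_one.le) (fun _ => by simp) (fun w => ?_)
      (fun n => ⟨S n, n, rfl⟩) (lp.single 2 0 1) ((lp.norm_single two_pos 0 1).trans_le norm_one.le)
      one_pos fun n => ?_
    · rw [← Nat.cofinite_eq_atTop]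
      simpa [lp.inner_single_left] using lp.tendsto_cofinite_zero w
    · simp [S, leftShift_single]
end
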